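/- For a finite poset P, the vertices of the order polytope O(P) are exactly the indicator functions of filters of P; that is, a 0-1 valued function f: P → {0,1} lies in O(P) iff its support {x : f(x) = 1} is a filter, and these are exactly the vertices. -/

import Mathlib

/-!
A 0-1 valued function is an extreme point of the cube `[0,1]^P`, hence of the smaller set `O(P)`.
Conversely, every `f ∈ O(P)` is the midpoint of `min (2f) 1` and `max (2f - 1) 0`, which lie in
`O(P)` because they are obtained from `f` by composing with monotone self-maps of `[0,1]`; these
two points coincide with `f` exactly where `f` takes the values `0` or `1`.
-/

/-- The order polytope: order-preserving maps `P → [0,1]`. -/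
def orderPolytope (P : Type*) [PartialOrder P] : Set (P → ℝ) :=
  {f | (∀ z, f z ∈ Set.Icc (0:ℝ) 1) ∧ Monotone f}

open Set

namespace orderPolytope

variable {P : Type*} [PartialOrder P] {f : P → ℝ}

lemma subset_pi_Icc : orderPolytope P ⊆ univ.pi fun _ ↦ Icc 0 1 :=
  fun _ hf z _ ↦ hf.1 z

lemma comp_mem {φ : ℝ → ℝ} (hmaps : MapsTo φ (Icc 0 1) (Icc 0 1))
    (hmono : MonotoneOn φ (Icc 0 1)) (hf : f ∈ orderPolytope P) : φ ∘ f ∈ orderPolytope P :=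
  ⟨fun z ↦ hmaps (hf.1 z), fun _ _ hab ↦ hmono (hf.1 _) (hf.1 _) (hf.2 hab)⟩

lemma mem_iff_isUpperSet (h01 : ∀ z, f z = 0 ∨ f z = 1) :
    f ∈ orderPolytope P ↔ IsUpperSet {z | f z = 1} := by
  constructor
  · intro hf a b hab (ha : f a = 1)
    rcases h01 b with hb | hb
    · linarith [hf.2 hab]
    · exact hb
  · intro hup
    refine ⟨fun z ↦ ?_, fun a b hab ↦ ?_⟩
    · rcases h01 z with h | h <;> simp [h]
    · rcases h01 a with ha | ha
      · rcases h01 b with hb | hb <;> simp [ha, hb]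
      · rw [ha, hup hab ha]

lemma eq_zero_or_eq_one_of_mem_extremePoints (hf : f ∈ extremePoints ℝ (orderPolytope P))
    (z : P) : f z = 0 ∨ f z = 1 := by
  have hlow : (fun x ↦ min (2 * x) 1) ∘ f ∈ orderPolytope P :=
    comp_mem (fun x ⟨h0, _⟩ ↦ ⟨by positivity, min_le_right _ _⟩)
      (fun x _ y _ hxy ↦ min_le_min_right _ (by linarith)) hf.1
  have hhigh : (fun x ↦ max (2 * x - 1) 0) ∘ f ∈ orderPolytope P :=
    comp_mem (fun x ⟨h0, h1⟩ ↦ ⟨le_max_right _ _, max_le (by linarith) zero_le_one⟩)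
      (fun x _ y _ hxy ↦ max_le_max_right _ (by linarith)) hf.1
  have hmid :
      f ∈ openSegment ℝ ((fun x ↦ min (2 * x) 1) ∘ f) ((fun x ↦ max (2 * x - 1) 0) ∘ f) := by
    refine ⟨1 / 2, 1 / 2, by norm_num, by norm_num, by norm_num, funext fun w ↦ ?_⟩
    simp only [Pi.add_apply, Pi.smul_apply, Function.comp_apply, smul_eq_mul]
    rcases le_total (2 * f w) 1 with h | h
    · rw [min_eq_left h, max_eq_right (by linarith)]; ring
    · rw [min_eq_right h, max_eq_left (by linarith)]; ring
  have hz : min (2 * f z) 1 = f z := congrFun (hf.2 hlow hhigh hmid) z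
  rcases min_choice (2 * f z) 1 with h | h <;> rw [h] at hz
  · exact Or.inl (by linarith)
  · exact Or.inr hz.symm

lemma mem_extremePoints_iff :
    f ∈ extremePoints ℝ (orderPolytope P) ↔ f ∈ orderPolytope P ∧ ∀ z, f z = 0 ∨ f z = 1 := by
  refine ⟨fun hf ↦ ⟨hf.1, eq_zero_or_eq_one_of_mem_extremePoints hf⟩, fun ⟨hf, h01⟩ ↦ ?_⟩
  refine inter_extremePoints_subset_extremePoints_of_subset subset_pi_Icc ⟨hf, ?_⟩
  rw [extremePoints_pi]
  intro z _
  rw [extremePoints_Icc zero_le_one]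
  exact h01 z

end orderPolytope

theorem orderPolytope_vertices_general {P : Type*} [PartialOrder P] :
    (∀ f : P → ℝ, (∀ z, f z = 0 ∨ f z = 1) →
      (f ∈ orderPolytope P ↔ IsUpperSet {z | f z = 1})) ∧
    (∀ f : P → ℝ, f ∈ Set.extremePoints ℝ (orderPolytope P) ↔
      ((∀ z, f z = 0 ∨ f z = 1) ∧ IsUpperSet {z | f z = 1})) := by
  refine ⟨fun f h01 ↦ orderPolytope.mem_iff_isUpperSet h01, fun f ↦ ?_⟩
  rw [orderPolytope.mem_extremePoints_iff]
  exact ⟨fun ⟨hf, h01⟩ ↦ ⟨h01, (orderPolytope.mem_iff_isUpperSet h01).1 hf⟩,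
    fun ⟨h01, hup⟩ ↦ ⟨(orderPolytope.mem_iff_isUpperSet h01).2 hup, h01⟩⟩

theorem orderPolytope_vertices {P : Type*} [PartialOrder P] [Fintype P] :
    (∀ f : P → ℝ, (∀ z, f z = 0 ∨ f z = 1) →
      (f ∈ orderPolytope P ↔ IsUpperSet {z | f z = 1})) ∧
    (∀ f : P → ℝ, f ∈ Set.extremePoints ℝ (orderPolytope P) ↔
      ((∀ z, f z = 0 ∨ f z = 1) ∧ IsUpperSet {z | f z = 1})) :=
  orderPolytope_vertices_general
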